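/- Let H = H(n,r,q|σ) with δ(σ) ≥ r - β + 1 and 2 ≤ s(σ) ≤ β. Then the (2,β)-spectrum of H has no gaps above n: if H admits a k-(2,β)-colouring for some k > n+1, then H admits a k'-(2,β)-colouring for every k' with n+1 ≤ k' ≤ k. -/

import Mathlib

open Finset

/-- `K` is an edge of the σ-hypergraph `H(n,r,q | σ)`: the multiset of non-zero
cardinalities of the intersections of `K` with the `n` classes equals `σ`. -/
def sigmaEdge (n q : ℕ) (σ : Multiset ℕ) (K : Finset (Fin n × Fin q)) : Prop :=
  (((Finset.univ : Finset (Fin n)).val.map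
      fun i => (K.filter fun v => v.1 = i).card).filter fun m => m ≠ 0) = σ

/-- `c` is an `(α,β)`-colouring: every edge contains at least `α` and at most `β` colours. -/
def isABColouring (n q : ℕ) (σ : Multiset ℕ) (α β : ℕ) (c : Fin n × Fin q → ℕ) : Prop :=
  ∀ K : Finset (Fin n × Fin q), sigmaEdge n q σ K →
    α ≤ (K.image c).card ∧ (K.image c).card ≤ β

/-- `c` uses exactly `k` colours. -/
def usesExactly (n q k : ℕ) (c : Fin n × Fin q → ℕ) : Prop :=
  ((Finset.univ : Finset (Fin n × Fin q)).image c).card = k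

/-- every class of the σ-hypergraph is monochromatic under `c`. -/
def classesMonochromatic (n q : ℕ) (c : Fin n × Fin q → ℕ) : Prop :=
  ∀ v w : Fin n × Fin q, v.1 = w.1 → c v = c w

/-- `σ` is a partition of `r` (a multiset of positive integers summing to `r`). -/
def IsPartitionOf (σ : Multiset ℕ) (r : ℕ) : Prop := σ.sum = r ∧ 0 ∉ σ

/-!
Call a colour of class `i` fresh if it occurs in no earlier class; the numbers `f i` of fresh
colours add up to `k`. Since `n ≤ k' ≤ k`, there are `t i` with `1 ≤ t i ≤ max (f i) 1` and
`∑ t i = k'`; give class `i` a private palette of `t i` colours. An edge meets `s(σ) ≥ 2`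
classes, so it sees at least two colours. If every class met by an edge `K` has a fresh colour,
`K` sees at most `∑ min (#(K ∩ V_i)) (f i)` colours, and the old colouring shows that many
colours on an edge with the same intersection sizes as `K`, so this is at most `β`. Otherwise
a class met by `K` gets a single colour and `K` sees at most `1 + r - δ ≤ β` colours.
-/

lemma Finset.card_image_eq_sum_card_image_filter_fst {α ι β : Type*} [Fintype ι] [DecidableEq ι]
    [DecidableEq β] (f : α → ι × β) (S : Finset α) :
    #(S.image f) = ∑ i, #({a ∈ S | (f a).1 = i}.image f) := by
  rw [card_eq_sum_card_fiberwise (f := Prod.fst) (t := univ) fun _ _ => mem_coe.2 (mem_univ _)]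
  simp only [filter_image]

lemma Finset.sum_card_disjointed {ι α : Type*} [Fintype ι] [LinearOrder ι]
    [LocallyFiniteOrderBot ι] [DecidableEq α] (A : ι → Finset α) :
    ∑ i, #(disjointed A i) = #(univ.sup A) := by
  rw [← Fintype.sup_disjointed, sup_eq_biUnion,
    card_biUnion fun i _ j _ hij => disjoint_disjointed A hij]

lemma Finset.exists_subset_card_eq_min_le_card_image_inter {α β : Type*} [DecidableEq α]
    [DecidableEq β] (f : α → β) {S : Finset α} {N : Finset β} (hN : N ⊆ S.image f) {p : ℕ}
    (hp : p ≤ #S) : ∃ V ⊆ S, #V = p ∧ min p #N ≤ #(V.image f ∩ N) := by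
  obtain ⟨T, hTN, hT⟩ := exists_subset_card_eq (min_le_right p #N)
  obtain ⟨W, hWS, hWinj, hWT⟩ := exists_subset_injOn_image_eq_of_surjOn (f := f) S T
    fun b hb => by simpa using hN (hTN hb)
  have hW : #W ≤ p := by
    rw [← card_image_of_injOn hWinj, hWT, hT]
    exact min_le_left _ _
  obtain ⟨V, hWV, hVS, hV⟩ := exists_subsuperset_card_eq (coe_subset.1 hWS) hW hp
  refine ⟨V, hVS, hV, hT ▸ card_le_card fun b hb => mem_inter.2 ⟨?_, hTN hb⟩⟩
  rw [← hWT] at hb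
  exact image_subset_image hWV hb

lemma Finset.exists_le_le_sum_eq {ι : Type*} [DecidableEq ι] (s : Finset ι) {a w : ι → ℕ}
    (haw : ∀ i ∈ s, a i ≤ w i) {m : ℕ} (ham : ∑ i ∈ s, a i ≤ m) (hmw : m ≤ ∑ i ∈ s, w i) :
    ∃ t : ι → ℕ, (∀ i ∈ s, a i ≤ t i ∧ t i ≤ w i) ∧ ∑ i ∈ s, t i = m := by
  induction s using Finset.induction_on generalizing m with
  | empty => exact ⟨a, by simp, by simp at hmw ⊢; omega⟩
  | insert j s hj ih =>
    rw [sum_insert hj] at ham hmw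
    have haw' := haw j (mem_insert_self j s)
    have has : ∑ i ∈ s, a i ≤ ∑ i ∈ s, w i := sum_le_sum fun i hi => haw i (mem_insert_of_mem hi)
    -- `j` takes as much of `m` as `w j` allows while leaving the rest of `s` its minimum
    obtain ⟨x, hx⟩ : ∃ x, x = min (w j) (m - ∑ i ∈ s, a i) := ⟨_, rfl⟩
    obtain ⟨t, ht, hts⟩ := ih (fun i hi => haw i (mem_insert_of_mem hi)) (m := m - x)
      (by omega) (by omega)
    refine ⟨Function.update t j x, ?_, ?_⟩
    · intro i hi
      rcases eq_or_ne i j with rfl | hij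
      · simp only [Function.update_self]; omega
      · rw [Function.update_of_ne hij]
        exact ht i ((mem_insert.1 hi).resolve_left hij)
    · rw [sum_insert hj, Function.update_self, sum_congr rfl fun i hi =>
        Function.update_of_ne (ne_of_mem_of_not_mem hi hj) x t, hts]
      omega

section Profile

variable {n q : ℕ} {σ : Multiset ℕ} {K K' : Finset (Fin n × Fin q)}

lemma card_filter_fst_eq (i : Fin n) : #{v : Fin n × Fin q | v.1 = i} = q := by
  rw [show ({v : Fin n × Fin q | v.1 = i} : Finset _) = {i} ×ˢ univ by ext ⟨j, _⟩; simp [eq_comm],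
    card_product, card_singleton, card_univ, Fintype.card_fin, one_mul]

lemma card_filter_fst_ne_zero_iff {i : Fin n} :
    #{v ∈ K | v.1 = i} ≠ 0 ↔ i ∈ K.image Prod.fst := by
  simp

lemma sigmaEdge.of_card_filter_eq (hK : sigmaEdge n q σ K)
    (h : ∀ i, #{v ∈ K' | v.1 = i} = #{v ∈ K | v.1 = i}) : sigmaEdge n q σ K' := by
  unfold sigmaEdge at hK ⊢
  simpa only [h] using hK

lemma sigmaEdge.eq_map (hK : sigmaEdge n q σ K) :
    σ = (K.image Prod.fst).val.map fun i => #{v ∈ K | v.1 = i} := by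
  rw [← hK, Multiset.filter_map, ← Finset.filter_val]
  congr 2
  ext i
  simp only [mem_filter, mem_univ, true_and, Function.comp, card_filter_fst_ne_zero_iff]

lemma sigmaEdge.sum_card_filter (hK : sigmaEdge n q σ K) :
    ∑ i, #{v ∈ K | v.1 = i} = σ.sum := by
  rw [hK.eq_map, ← Finset.sum_eq_multiset_sum]
  refine (sum_subset (subset_univ _) fun i _ hi => ?_).symm
  by_contra h
  exact hi (card_filter_fst_ne_zero_iff.1 h)

lemma sigmaEdge.card_filter_mem (hK : sigmaEdge n q σ K) {i : Fin n}
    (hi : i ∈ K.image Prod.fst) : #{v ∈ K | v.1 = i} ∈ σ := by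
  rw [hK.eq_map]
  exact Multiset.mem_map_of_mem _ hi

lemma sigmaEdge.card_image_fst (hK : sigmaEdge n q σ K) : #(K.image Prod.fst) = σ.card := by
  rw [hK.eq_map, Multiset.card_map, card_val]

end Profile

section Colourings

variable {n q : ℕ}

def classColours (c : Fin n × Fin q → ℕ) (i : Fin n) : Finset ℕ :=
  ({v | v.1 = i} : Finset (Fin n × Fin q)).image c

def freshColours (c : Fin n × Fin q → ℕ) : Fin n → Finset ℕ :=
  disjointed (classColours c)

lemma sum_card_freshColours (c : Fin n × Fin q → ℕ) :
    ∑ i, #(freshColours c i) = #(univ.image c) := by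
  rw [freshColours, sum_card_disjointed]
  congr 1
  ext x
  simp [classColours]

lemma card_freshColours_le (c : Fin n × Fin q → ℕ) (i : Fin n) : #(freshColours c i) ≤ q :=
  calc #(freshColours c i) ≤ #(classColours c i) := card_le_card (disjointed_le _ i)
    _ ≤ #{v : Fin n × Fin q | v.1 = i} := card_image_le
    _ = q := card_filter_fst_eq i

lemma exists_card_filter_eq_sum_min_le (c : Fin n × Fin q → ℕ) (K : Finset (Fin n × Fin q)) :
    ∃ K' : Finset (Fin n × Fin q), (∀ i, #{v ∈ K' | v.1 = i} = #{v ∈ K | v.1 = i}) ∧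
      ∑ i, min #{v ∈ K | v.1 = i} #(freshColours c i) ≤ #(K'.image c) := by
  have hV : ∀ i, ∃ V ⊆ ({v | v.1 = i} : Finset (Fin n × Fin q)), #V = #{v ∈ K | v.1 = i} ∧
      min #{v ∈ K | v.1 = i} #(freshColours c i) ≤ #(V.image c ∩ freshColours c i) := fun i =>
    exists_subset_card_eq_min_le_card_image_inter c (disjointed_le _ i)
      (card_le_card (filter_subset_filter _ (subset_univ K)))
  choose V hVi hVcard hVfresh using hV
  have hfst : ∀ {i v}, v ∈ V i → v.1 = i := fun hv => (mem_filter.1 (hVi _ hv)).2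
  refine ⟨univ.biUnion V, fun i => ?_, ?_⟩
  · rw [← hVcard i]
    congr 1
    ext v
    simp only [mem_filter, mem_biUnion, mem_univ, true_and]
    exact ⟨fun ⟨⟨j, hv⟩, hvi⟩ => hvi ▸ hfst hv ▸ hv, fun hv => ⟨⟨i, hv⟩, hfst hv⟩⟩
  · -- fresh colours of different classes are distinct, so the classes' contributions add up
    calc ∑ i, min #{v ∈ K | v.1 = i} #(freshColours c i)
        ≤ ∑ i, #((V i).image c ∩ freshColours c i) := sum_le_sum fun i _ => hVfresh i
      _ = #(univ.biUnion fun i => (V i).image c ∩ freshColours c i) :=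
        (card_biUnion fun i _ j _ hij => ((disjoint_disjointed _ hij).mono inter_subset_right
          inter_subset_right)).symm
      _ ≤ #((univ.biUnion V).image c) := card_le_card <| biUnion_subset.2 fun i _ =>
        inter_subset_left.trans (image_subset_image (subset_biUnion_of_mem V (mem_univ i)))

lemma sum_min_card_freshColours_le {σ : Multiset ℕ} {α β : ℕ} {c : Fin n × Fin q → ℕ}
    (hc : isABColouring n q σ α β c) {K : Finset (Fin n × Fin q)} (hK : sigmaEdge n q σ K) :
    ∑ i, min #{v ∈ K | v.1 = i} #(freshColours c i) ≤ β := by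
  obtain ⟨K', hK', hle⟩ := exists_card_filter_eq_sum_min_le c K
  exact hle.trans (hc K' (hK.of_card_filter_eq hK')).2

end Colourings

section BlockColouring

variable {n q : ℕ}

def blockColouring (t : Fin n → ℕ) (v : Fin n × Fin q) : Fin n × ℕ :=
  (v.1, min v.2 (t v.1 - 1))

lemma image_filter_blockColouring_subset (t : Fin n → ℕ) {i : Fin n} (hi : 0 < t i)
    (S : Finset (Fin n × Fin q)) :
    {v ∈ S | v.1 = i}.image (blockColouring t) ⊆ {i} ×ˢ range (t i) := by
  intro x hx
  obtain ⟨v, hv, rfl⟩ := mem_image.1 hx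
  obtain rfl := (mem_filter.1 hv).2
  simp only [blockColouring, mem_product, mem_singleton, mem_range, true_and]
  omega

lemma card_image_filter_blockColouring_le (t : Fin n → ℕ) {i : Fin n} (hi : 0 < t i)
    (S : Finset (Fin n × Fin q)) :
    #({v ∈ S | v.1 = i}.image (blockColouring t)) ≤ min #{v ∈ S | v.1 = i} (t i) :=
  le_min card_image_le <| (card_le_card (image_filter_blockColouring_subset t hi S)).trans
    (by rw [card_product, card_singleton, card_range, one_mul])

lemma card_image_blockColouring_eq_sum (t : Fin n → ℕ) (S : Finset (Fin n × Fin q)) :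
    #(S.image (blockColouring t)) = ∑ i, #({v ∈ S | v.1 = i}.image (blockColouring t)) :=
  card_image_eq_sum_card_image_filter_fst _ S

lemma card_image_blockColouring (t : Fin n → ℕ) (ht : ∀ i, 0 < t i ∧ t i ≤ q) :
    #((univ : Finset (Fin n × Fin q)).image (blockColouring t)) = ∑ i, t i := by
  rw [card_image_blockColouring_eq_sum]
  refine sum_congr rfl fun i _ => ?_
  have hsub := image_filter_blockColouring_subset t (ht i).1 (univ : Finset (Fin n × Fin q))
  have hsup : {i} ×ˢ range (t i) ⊆
      {v ∈ (univ : Finset (Fin n × Fin q)) | v.1 = i}.image (blockColouring t) := by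
    rintro ⟨j, m⟩ hjm
    obtain ⟨hm, rfl⟩ : m < t i ∧ i = j := by simpa using hjm
    refine mem_image.2 ⟨(i, ⟨m, by have := ht i; omega⟩), by simp, ?_⟩
    simp only [blockColouring, Prod.mk.injEq, true_and]
    omega
  rw [subset_antisymm hsub hsup, card_product, card_singleton, card_range, one_mul]

lemma card_image_fst_le_card_image_blockColouring (t : Fin n → ℕ) (S : Finset (Fin n × Fin q)) :
    #(S.image Prod.fst) ≤ #(S.image (blockColouring t)) := by
  rw [show S.image Prod.fst = (S.image (blockColouring t)).image Prod.fst by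
    rw [image_image]; rfl]
  exact card_image_le

lemma card_image_blockColouring_le {σ : Multiset ℕ} {α β : ℕ} {c : Fin n × Fin q → ℕ}
    (hc : isABColouring n q σ α β c) (hσ : ∀ x ∈ σ, σ.sum - β + 1 ≤ x) {t : Fin n → ℕ}
    (ht : ∀ i, 0 < t i ∧ t i ≤ max #(freshColours c i) 1) {K : Finset (Fin n × Fin q)}
    (hK : sigmaEdge n q σ K) : #(K.image (blockColouring t)) ≤ β := by
  have hclass i := card_image_filter_blockColouring_le t (ht i).1 K
  rw [card_image_blockColouring_eq_sum]
  by_cases hfresh : ∀ i ∈ K.image Prod.fst, 0 < #(freshColours c i)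
  · refine le_trans (sum_le_sum fun i _ => (hclass i).trans ?_) (sum_min_card_freshColours_le hc hK)
    by_cases hi : i ∈ K.image Prod.fst
    · exact min_le_min_left _ ((ht i).2.trans (max_le le_rfl (hfresh i hi)))
    · simp [not_not.1 (card_filter_fst_ne_zero_iff.not.2 hi)]
  · -- a class of `K` without fresh colours gets a single colour
    push Not at hfresh
    obtain ⟨i₀, hi₀, h0⟩ := hfresh
    have ht₀ : t i₀ = 1 := by have := ht i₀; omega
    have hP₀ := hσ _ (hK.card_filter_mem hi₀)
    have hP₀pos := card_filter_fst_ne_zero_iff.2 hi₀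
    have hsum := hK.sum_card_filter
    rw [← add_sum_erase _ _ (mem_univ i₀)] at hsum ⊢
    have hrest := sum_le_sum fun i (_ : i ∈ univ.erase i₀) => (hclass i).trans (min_le_left _ _)
    have h₀ := (hclass i₀).trans (min_le_right _ _)
    omega

lemma isABColouring_encode_blockColouring {σ : Multiset ℕ} {α β : ℕ} {c : Fin n × Fin q → ℕ}
    (hc : isABColouring n q σ α β c) (hα : α ≤ σ.card) (hσ : ∀ x ∈ σ, σ.sum - β + 1 ≤ x)
    {t : Fin n → ℕ} (ht : ∀ i, 0 < t i ∧ t i ≤ max #(freshColours c i) 1) :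
    isABColouring n q σ α β (Encodable.encode ∘ blockColouring t) := by
  intro K hK
  rw [← image_image, card_image_of_injective _ Encodable.encode_injective]
  exact ⟨hα.trans (hK.card_image_fst ▸ card_image_fst_le_card_image_blockColouring t K),
    card_image_blockColouring_le hc hσ ht hK⟩

end BlockColouring

theorem stmt14_general (n r q β δ : ℕ) (σ : Multiset ℕ)
    (hpart : IsPartitionOf σ r)
    (hδmin : ∀ x ∈ σ, δ ≤ x)
    (hδ : r - β + 1 ≤ δ) (hs2 : 2 ≤ σ.card)
    (k : ℕ)
    (hcol : ∃ c : Fin n × Fin q → ℕ, isABColouring n q σ 2 β c ∧ usesExactly n q k c) :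
    ∀ k' : ℕ, n + 1 ≤ k' → k' ≤ k →
      ∃ c : Fin n × Fin q → ℕ, isABColouring n q σ 2 β c ∧ usesExactly n q k' c := by
  obtain ⟨c, hc, hck⟩ := hcol
  intro k' hk' hk'k
  have hq : 0 < q := by
    obtain ⟨x, hx⟩ := card_pos.1 (hck ▸ (by omega : 0 < k))
    obtain ⟨v, -, -⟩ := mem_image.1 hx
    exact v.2.pos
  obtain ⟨t, ht, htk'⟩ := exists_le_le_sum_eq univ (a := fun _ => 1)
    (w := fun i => max #(freshColours c i) 1) (fun i _ => le_max_right _ _) (m := k')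
    (by simp only [sum_const, card_univ, Fintype.card_fin, smul_eq_mul, mul_one]; omega)
    (hk'k.trans (hck ▸ sum_card_freshColours c ▸ sum_le_sum fun i _ => le_max_left _ _))
  have ht' i : 0 < t i ∧ t i ≤ max #(freshColours c i) 1 := ht i (mem_univ i)
  have hσ : ∀ x ∈ σ, σ.sum - β + 1 ≤ x := fun x hx => hpart.1 ▸ hδ.trans (hδmin x hx)
  refine ⟨Encodable.encode ∘ blockColouring t,
    isABColouring_encode_blockColouring hc hs2 hσ ht', ?_⟩
  rw [usesExactly, ← image_image, card_image_of_injective _ Encodable.encode_injective,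
    card_image_blockColouring t fun i => ⟨(ht' i).1, (ht' i).2.trans
      (max_le (card_freshColours_le c i) hq)⟩, htk']

theorem stmt14 (n r q β δ : ℕ) (σ : Multiset ℕ)
    (hpart : IsPartitionOf σ r)
    (hδmem : δ ∈ σ) (hδmin : ∀ x ∈ σ, δ ≤ x)
    (hδ : r - β + 1 ≤ δ) (hs2 : 2 ≤ σ.card) (hsβ : σ.card ≤ β)
    (k : ℕ) (hk : n + 1 < k)
    (hcol : ∃ c : Fin n × Fin q → ℕ, isABColouring n q σ 2 β c ∧ usesExactly n q k c) :
    ∀ k' : ℕ, n + 1 ≤ k' → k' ≤ k →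
      ∃ c : Fin n × Fin q → ℕ, isABColouring n q σ 2 β c ∧ usesExactly n q k' c :=
  stmt14_general n r q β δ σ hpart hδmin hδ hs2 k hcol
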